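/- arXiv:2203.02165 — 2 statements merged into one kernel-verified Lean document; each statement's English description precedes it below -/
import Mathlib

section
/- Let α+δ+β < 1 and let u₁, u₂ be positive smooth functions on the unit sphere Sⁿ such that the matrices D²uᵢ + uᵢ·I are positive definite and both satisfy ψ u^(α−1) (u² + |Du|²)^(δ/2) σ_k^(β/k)(D²u + u·I) = c for the same constant c > 0 and positive function ψ. Then u₁ ≡ u₂. -/
open Metric
open scoped RealInnerProductSpace

/-- The k-th elementary symmetric function of the eigenvalues of a matrix,
extracted from the characteristic polynomial. -/
noncomputable def sigmaK {n : ℕ} (k : ℕ) (A : Matrix (Fin n) (Fin n) ℝ) : ℝ :=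
  (-1 : ℝ) ^ k * A.charpoly.coeff (n - k)

open Matrix Polynomial

lemma det_piecewise_one {R : Type*} [CommRing R] {m : Type*} [Fintype m] [DecidableEq m]
    (A : Matrix m m R) (s : Finset m) :
    (Matrix.of (s.piecewise (fun i => (1 : Matrix m m R) i) (fun i => A i))).det
      = Matrix.det (A.submatrix (fun i => (i : m)) (fun i => (i : m)) :
          Matrix {x : m // x ∉ s} {x : m // x ∉ s} R) := by
  classical
  set M := Matrix.of (s.piecewise (fun i => (1 : Matrix m m R) i) (fun i => A i)) with hM
  rw [← Matrix.det_submatrix_equiv_self (Equiv.sumCompl (· ∈ s)) M]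
  have : M.submatrix (Equiv.sumCompl (· ∈ s)) (Equiv.sumCompl (· ∈ s)) =
      Matrix.fromBlocks 1 0
        (A.submatrix (fun i : {x : m // x ∉ s} => (i : m)) (fun j : {x : m // x ∈ s} => (j : m)))
        (A.submatrix (fun i => (i : m)) (fun i => (i : m)) :
          Matrix {x : m // x ∉ s} {x : m // x ∉ s} R) := by
    ext (i | i) (j | j) <;>
      simp only [Matrix.submatrix_apply, Matrix.fromBlocks_apply₁₁, Matrix.fromBlocks_apply₁₂,
        Matrix.fromBlocks_apply₂₁, Matrix.fromBlocks_apply₂₂, hM, Matrix.of_apply,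
        Equiv.sumCompl_apply_inl, Equiv.sumCompl_apply_inr]
    · rw [Finset.piecewise_eq_of_mem _ _ _ i.2]
      simp only [Matrix.one_apply]
      by_cases h : i = j
      · simp [h]
      · have : (i : m) ≠ (j : m) := fun hc => h (Subtype.ext hc)
        simp [h, this]
    · rw [Finset.piecewise_eq_of_mem _ _ _ i.2]
      simp only [Matrix.one_apply, Matrix.zero_apply]
      have : (i : m) ≠ (j : m) := fun hc => j.2 (hc ▸ i.2)
      simp [this]
    · rw [Finset.piecewise_eq_of_notMem _ _ _ i.2]
    · rw [Finset.piecewise_eq_of_notMem _ _ _ i.2]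
  rw [this, Matrix.det_fromBlocks_zero₁₂, Matrix.det_one, one_mul]

noncomputable def minorC {n : ℕ} (A : Matrix (Fin n) (Fin n) ℝ) (s : Finset (Fin n)) : ℝ :=
  Matrix.det (A.submatrix (fun i => (i : Fin n)) (fun i => (i : Fin n)) :
    Matrix {x : Fin n // x ∉ s} {x : Fin n // x ∉ s} ℝ)

lemma charpoly_eq_sum_minors {n : ℕ} (A : Matrix (Fin n) (Fin n) ℝ) :
    A.charpoly = ∑ s : Finset (Fin n),
      ((X : ℝ[X]) ^ s.card) * ((-1 : ℝ[X]) ^ (n - s.card) * C (minorC A s)) := by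
  classical
  set B : Matrix (Fin n) (Fin n) ℝ[X] := A.map (fun r => C r) with hB
  set E : Fin n → (Fin n → ℝ[X]) := fun i => (1 : Matrix (Fin n) (Fin n) ℝ[X]) i with hE
  set f := (Matrix.detRowAlternating :
      (Fin n → ℝ[X]) [⋀^Fin n]→ₗ[ℝ[X]] ℝ[X]).toMultilinearMap with hf
  set a : Fin n → (Fin n → ℝ[X]) := fun i => (X : ℝ[X]) • E i with ha
  set b : Fin n → (Fin n → ℝ[X]) := fun i => (-1 : ℝ[X]) • B i with hb
  have hrow : charmatrix A = Matrix.of (a + b) := by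
    refine Matrix.ext fun i j => ?_
    show charmatrix A i j = a i j + b i j
    by_cases h : i = j <;>
      simp [ha, hb, hE, hB, charmatrix_apply, Matrix.one_apply, Matrix.diagonal_apply, h,
        sub_eq_add_neg]
  have hdet : A.charpoly = f (a + b) := by
    rw [Matrix.charpoly, hrow]
    rfl
  rw [hdet, f.map_add_univ a b]
  refine Finset.sum_congr rfl fun s _ => ?_
  set m₂ : Fin n → (Fin n → ℝ[X]) := s.piecewise E (fun i => B i) with hm₂
  set m₁ : Fin n → (Fin n → ℝ[X]) := s.piecewise E b with hm₁
  have t1 : s.piecewise a b = s.piecewise (fun i => (X : ℝ[X]) • m₁ i) m₁ := by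
    funext i
    by_cases h : i ∈ s <;>
      simp [Finset.piecewise_eq_of_mem _ _ _ , Finset.piecewise_eq_of_notMem, h, hm₁, ha]
  have t2 : m₁ = sᶜ.piecewise (fun i => (-1 : ℝ[X]) • m₂ i) m₂ := by
    funext i
    by_cases h : i ∈ s
    · have h' : i ∉ sᶜ := by simp [h]
      simp [hm₁, hm₂, Finset.piecewise_eq_of_mem _ _ _ h, Finset.piecewise_eq_of_notMem _ _ _ h']
    · have h' : i ∈ sᶜ := by simp [h]
      simp [hm₁, hm₂, hb, Finset.piecewise_eq_of_notMem _ _ _ h,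
        Finset.piecewise_eq_of_mem _ _ _ h']
  have e1 : f (s.piecewise a b) = (X : ℝ[X]) ^ s.card • f m₁ := by
    rw [t1, f.map_piecewise_smul (fun _ => (X : ℝ[X])) m₁ s, Finset.prod_const]
  have e2 : f m₁ = (-1 : ℝ[X]) ^ (n - s.card) • f m₂ := by
    rw [t2, f.map_piecewise_smul (fun _ => (-1 : ℝ[X])) m₂ sᶜ, Finset.prod_const,
      Finset.card_compl, Fintype.card_fin]
  have e3 : f m₂ = C (minorC A s) := by
    have : f m₂ = (Matrix.of (s.piecewise (fun i => (1 : Matrix (Fin n) (Fin n) ℝ[X]) i)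
        (fun i => B i))).det := rfl
    rw [this, det_piecewise_one B s]
    have hsub : (B.submatrix (fun i => (i : Fin n)) (fun i => (i : Fin n)) :
          Matrix {x : Fin n // x ∉ s} {x : Fin n // x ∉ s} ℝ[X])
        = (A.submatrix (fun i => (i : Fin n)) (fun i => (i : Fin n)) :
          Matrix {x : Fin n // x ∉ s} {x : Fin n // x ∉ s} ℝ).map (fun r => C r) := by
      ext i j; simp [hB]
    rw [hsub, minorC]
    exact ((C : ℝ →+* ℝ[X]).map_det _).symm
  rw [e1, e2, e3, smul_eq_mul, smul_eq_mul]

lemma sigmaK_eq_sum {n k : ℕ} (hkn : k ≤ n) (A : Matrix (Fin n) (Fin n) ℝ) :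
    sigmaK k A = ∑ s ∈ Finset.univ.filter (fun s : Finset (Fin n) => s.card = n - k),
      minorC A s := by
  classical
  rw [sigmaK, charpoly_eq_sum_minors A, finset_sum_coeff]
  have hco : ∀ s : Finset (Fin n),
      (((X : ℝ[X]) ^ s.card) * ((-1 : ℝ[X]) ^ (n - s.card) * C (minorC A s))).coeff (n - k)
        = if s.card = n - k then (-1 : ℝ) ^ (n - s.card) * minorC A s else 0 := by
    intro s
    have hC : C ((-1 : ℝ) ^ (n - s.card) * minorC A s)
        = (-1 : ℝ[X]) ^ (n - s.card) * C (minorC A s) := by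
      rw [_root_.map_mul, _root_.map_pow, _root_.map_neg, _root_.map_one]
    have : ((X : ℝ[X]) ^ s.card) * ((-1 : ℝ[X]) ^ (n - s.card) * C (minorC A s))
        = C ((-1 : ℝ) ^ (n - s.card) * minorC A s) * X ^ s.card := by
      rw [hC]; ring
    rw [this, coeff_C_mul, coeff_X_pow]
    by_cases h : s.card = n - k
    · simp [h]
    · have h2 : ¬(n - k = s.card) := fun hc => h hc.symm
      simp [h, h2]
  rw [Finset.sum_congr rfl (fun s _ => hco s), Finset.mul_sum, Finset.sum_filter]
  refine Finset.sum_congr rfl fun s _ => ?_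
  by_cases h : s.card = n - k
  · have hk' : n - s.card = k := by omega
    rw [if_pos h, if_pos h, hk', ← mul_assoc, ← mul_pow, neg_mul_neg, one_mul, one_pow, one_mul]
  · rw [if_neg h, if_neg h, mul_zero]

lemma posDef_submatrix {m l : Type*} [Fintype m] [Fintype l] [DecidableEq m] [DecidableEq l]
    {A : Matrix m m ℝ} (hA : A.PosDef) (f : l → m) (hf : Function.Injective f) :
    (A.submatrix f f).PosDef := by
  classical
  set P : Matrix m l ℝ := Matrix.of fun j i => if f i = j then 1 else 0 with hP
  have hsub : A.submatrix f f = Pᴴ * A * P := by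
    ext i i'
    simp only [Matrix.submatrix_apply, Matrix.mul_apply, Matrix.conjTranspose_apply, hP,
      Matrix.of_apply, star_trivial, ite_mul, mul_ite, one_mul, mul_one, zero_mul, mul_zero]
    simp [Finset.sum_ite_eq, Finset.sum_ite_eq']
  have hPinj : ∀ x : l → ℝ, x ≠ 0 → P *ᵥ x ≠ 0 := by
    intro x hx hc
    obtain ⟨i₀, hi₀⟩ := Function.ne_iff.mp hx
    apply hi₀
    have hzero := congrFun hc (f i₀)
    have hval : (P *ᵥ x) (f i₀) = x i₀ := by
      rw [Matrix.mulVec, dotProduct, Finset.sum_eq_single i₀]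
      · simp [hP]
      · intro i _ hi
        simp only [hP, Matrix.of_apply]
        rw [if_neg (fun hc' => hi (hf hc'))]
        exact zero_mul _
      · intro h; exact absurd (Finset.mem_univ _) h
    rw [hval] at hzero
    simpa using hzero
  refine Matrix.PosDef.of_dotProduct_mulVec_pos ?_ fun x hx => ?_
  · have : (A.submatrix f f)ᴴ = Aᴴ.submatrix f f := Matrix.conjTranspose_submatrix A f f
    rw [Matrix.IsHermitian, this, hA.1.eq]
  · rw [hsub]
    have := hA.dotProduct_mulVec_pos (hPinj x hx)
    simpa only [Matrix.star_mulVec, Matrix.dotProduct_mulVec, Matrix.vecMul_vecMul] using this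

lemma one_le_det_of_posSemidef_sub_one {m : Type*} [Fintype m] [DecidableEq m]
    {M : Matrix m m ℝ} (h : (M - 1).PosSemidef) : 1 ≤ M.det := by
  classical
  have hM : M.IsHermitian := by
    have h1 := h.isHermitian
    rw [← sub_add_cancel M 1]
    exact h1.add Matrix.isHermitian_one
  have hdet : M.det = ∏ i, hM.eigenvalues i := by
    simpa using hM.det_eq_prod_eigenvalues
  rw [hdet]
  have h1 : (1:ℝ) = ∏ _i : m, (1:ℝ) := by simp
  rw [h1]
  refine Finset.prod_le_prod (fun i _ => by norm_num) fun i _ => ?_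
  have hv := hM.eigenvalues_eq i
  set v : m → ℝ := ⇑(hM.eigenvectorBasis i) with hvdef
  have h2 := h.dotProduct_mulVec_nonneg v
  have hnorm : dotProduct (star v) v = 1 := by
    have : dotProduct (star v) v
        = @inner ℝ _ _ (hM.eigenvectorBasis i) (hM.eigenvectorBasis i) := by
      rw [hvdef, PiLp.inner_apply]
      simp [dotProduct, mul_comm, sq]
    rw [this, real_inner_self_eq_norm_sq, hM.eigenvectorBasis.orthonormal.1 i]
    norm_num
  have hexp : dotProduct (star v) ((M - 1) *ᵥ v)
      = dotProduct (star v) (M *ᵥ v) - 1 := by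
    rw [Matrix.sub_mulVec, dotProduct_sub, Matrix.one_mulVec, hnorm]
  rw [hexp] at h2
  have : hM.eigenvalues i = dotProduct (star v) (M *ᵥ v) := by
    simpa using hv
  rw [this]
  linarith

open scoped MatrixOrder in
lemma det_le_det_of_le {m : Type*} [Fintype m] [DecidableEq m] {A B : Matrix m m ℝ}
    (hA : A.PosDef) (hBA : (B - A).PosSemidef) : A.det ≤ B.det := by
  classical
  set S := CFC.sqrt A with hSdef
  have hSS : S * S = A := CFC.sqrt_mul_sqrt_self A hA.posSemidef.nonneg
  have hSh : S.IsHermitian := (CFC.sqrt_nonneg A).posSemidef.isHermitian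
  have hdetS : S.det * S.det = A.det := by rw [← Matrix.det_mul, hSS]
  have hdetA : 0 < A.det := hA.det_pos
  have hdetSne : S.det ≠ 0 := by
    intro hc; rw [hc, mul_zero] at hdetS; exact hdetA.ne (hdetS)
  have hSu : IsUnit S.det := isUnit_iff_ne_zero.mpr hdetSne
  set T := S⁻¹ with hTdef
  have hTS : T * S = 1 := Matrix.nonsing_inv_mul S hSu
  have hST : S * T = 1 := Matrix.mul_nonsing_inv S hSu
  have hTh : T.IsHermitian := hSh.inv
  set M := T * B * T with hMdef
  have hTAT : T * A * T = 1 := by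
    rw [← hSS, show T * (S * S) * T = (T * S) * (S * T) by noncomm_ring, hTS, hST, one_mul]
  have hM1 : M - 1 = T * (B - A) * T := by
    rw [Matrix.mul_sub, Matrix.sub_mul, hTAT]
  have hpsd : (M - 1).PosSemidef := by
    rw [hM1]
    have := hBA.conjTranspose_mul_mul_same T
    rwa [hTh.eq] at this
  have hdetM : 1 ≤ M.det := one_le_det_of_posSemidef_sub_one hpsd
  have hSMS : S * M * S = B := by
    rw [hMdef, show S * (T * B * T) * S = (S * T) * B * (T * S) by noncomm_ring, hST, hTS,
      one_mul, mul_one]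
  have : B.det = A.det * M.det := by
    rw [← hSMS, Matrix.det_mul, Matrix.det_mul, ← hdetS]; ring
  rw [this]
  nlinarith

lemma sigmaK_smul {n k : ℕ} (hkn : k ≤ n) (t : ℝ) (A : Matrix (Fin n) (Fin n) ℝ) :
    sigmaK k (t • A) = t ^ k * sigmaK k A := by
  classical
  rw [sigmaK_eq_sum hkn, sigmaK_eq_sum hkn, Finset.mul_sum]
  refine Finset.sum_congr rfl fun s hs => ?_
  have hcard : s.card = n - k := (Finset.mem_filter.mp hs).2
  have hcard' : Fintype.card {x : Fin n // x ∉ s} = k := by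
    have h1 : Fintype.card {x : Fin n // x ∉ s} = Fintype.card (Fin n) - s.card := by
      simpa using Fintype.card_subtype_compl (fun x : Fin n => x ∈ s)
    rw [h1, Fintype.card_fin, hcard]
    omega
  rw [minorC, minorC]
  have : ((t • A).submatrix (fun i => (i : Fin n)) (fun i => (i : Fin n)) :
      Matrix {x : Fin n // x ∉ s} {x : Fin n // x ∉ s} ℝ)
      = t • (A.submatrix (fun i => (i : Fin n)) (fun i => (i : Fin n)) :
      Matrix {x : Fin n // x ∉ s} {x : Fin n // x ∉ s} ℝ) := by
    ext i j; simp
  rw [this, Matrix.det_smul, hcard']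

lemma sigmaK_mono {n k : ℕ} (hkn : k ≤ n) {A B : Matrix (Fin n) (Fin n) ℝ}
    (hA : A.PosDef) (hBA : (B - A).PosSemidef) : sigmaK k A ≤ sigmaK k B := by
  classical
  rw [sigmaK_eq_sum hkn, sigmaK_eq_sum hkn]
  refine Finset.sum_le_sum fun s _ => ?_
  refine det_le_det_of_le (posDef_submatrix hA _ Subtype.val_injective) ?_
  have := hBA.submatrix (fun i : {x : Fin n // x ∉ s} => (i : Fin n))
  have hsub : ((B - A).submatrix (fun i => (i : Fin n)) (fun i => (i : Fin n)) :
      Matrix {x : Fin n // x ∉ s} {x : Fin n // x ∉ s} ℝ)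
      = (B.submatrix (fun i => (i : Fin n)) (fun i => (i : Fin n)) :
        Matrix {x : Fin n // x ∉ s} {x : Fin n // x ∉ s} ℝ)
      - (A.submatrix (fun i => (i : Fin n)) (fun i => (i : Fin n)) :
        Matrix {x : Fin n // x ∉ s} {x : Fin n // x ∉ s} ℝ) := by
    ext i j; simp
  rwa [hsub] at this

lemma sigmaK_pos {n k : ℕ} (hkn : k ≤ n) {A : Matrix (Fin n) (Fin n) ℝ}
    (hA : A.PosDef) : 0 < sigmaK k A := by
  classical
  rw [sigmaK_eq_sum hkn]
  refine Finset.sum_pos (fun s _ => (posDef_submatrix hA _ Subtype.val_injective).det_pos) ?_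
  obtain ⟨t, -, ht⟩ := Finset.exists_subset_card_eq (s := (Finset.univ : Finset (Fin n))) (n := n - k)
    (by rw [Finset.card_univ, Fintype.card_fin]; omega)
  exact ⟨t, Finset.mem_filter.mpr ⟨Finset.mem_univ _, ht⟩⟩

lemma deriv2_nonpos_of_isLocalMax {g G : ℝ → ℝ} {q : ℝ}
    (hmax : IsLocalMax g 0) (hG : ∀ᶠ s in nhds (0:ℝ), HasDerivAt g (G s) s)
    (hq : HasDerivAt G q 0) : q ≤ 0 := by
  by_contra hq0
  push_neg at hq0
  have hg0 : HasDerivAt g (G 0) 0 := hG.self_of_nhds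
  have hG0 : G 0 = 0 := by
    rw [← hg0.deriv]; exact hmax.deriv_eq_zero
  have hslope : Filter.Tendsto (fun s : ℝ => G s / s) (nhdsWithin 0 (Set.Ioi 0)) (nhds q) := by
    have h2 := hasDerivAt_iff_tendsto_slope.mp hq
    have h3 : Filter.Tendsto (slope G 0) (nhdsWithin 0 (Set.Ioi 0)) (nhds q) :=
      h2.mono_left (nhdsWithin_mono 0 (fun s hs => ne_of_gt hs))
    have h4 : (fun s : ℝ => G s / s) = slope G 0 := by
      funext s; rw [slope_def_field, hG0, sub_zero, sub_zero]
    rw [h4]; exact h3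
  have hGpos : ∀ᶠ s in nhdsWithin 0 (Set.Ioi 0), 0 < G s := by
    have h4 : ∀ᶠ s in nhdsWithin 0 (Set.Ioi 0), 0 < G s / s :=
      hslope.eventually (eventually_gt_nhds hq0)
    have h5 : ∀ᶠ s in nhdsWithin (0:ℝ) (Set.Ioi 0), s ∈ Set.Ioi 0 := eventually_mem_nhdsWithin
    filter_upwards [h4, h5] with s hs4 hs5
    rcases div_pos_iff.mp hs4 with ⟨h, _⟩ | ⟨_, h⟩
    · exact h
    · exact absurd hs5 (by simp [Set.mem_Ioi]; linarith)
  have hmax' : ∀ᶠ s in nhds (0:ℝ), g s ≤ g 0 := hmax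
  have hall : ∀ᶠ s in nhdsWithin 0 (Set.Ioi 0),
      0 < G s ∧ HasDerivAt g (G s) s ∧ g s ≤ g 0 := by
    filter_upwards [hGpos, (hG.and hmax').filter_mono nhdsWithin_le_nhds] with s h1 h2
    exact ⟨h1, h2.1, h2.2⟩
  obtain ⟨ε, hε, hεall⟩ := (nhdsGT_basis (0:ℝ)).eventually_iff.mp hall
  have hε2 : 0 < ε / 2 := by linarith
  have hmem : ∀ s, s ∈ Set.Ioo 0 (ε/2) ∨ s = ε/2 → s ∈ Set.Ioo 0 ε := by
    rintro s (hs | rfl)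
    · exact ⟨hs.1, by linarith [hs.2]⟩
    · exact ⟨hε2, by linarith⟩
  have hcont : ContinuousOn g (Set.Icc 0 (ε/2)) := by
    intro s hs
    rcases eq_or_lt_of_le hs.1 with h | h
    · rw [← h]; exact hg0.continuousAt.continuousWithinAt
    · rcases eq_or_lt_of_le hs.2 with h2 | h2
      · exact ((hεall (hmem s (Or.inr h2))).2.1.continuousAt).continuousWithinAt
      · exact ((hεall (hmem s (Or.inl ⟨h, h2⟩))).2.1.continuousAt).continuousWithinAt
  have hderiv : ∀ s ∈ interior (Set.Icc 0 (ε/2)), 0 < deriv g s := by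
    intro s hs
    rw [interior_Icc] at hs
    have h := hεall (hmem s (Or.inl hs))
    rw [h.2.1.deriv]
    exact h.1
  have hmono := strictMonoOn_of_deriv_pos (convex_Icc 0 (ε/2)) hcont hderiv
  have h01 : g 0 < g (ε/2) :=
    hmono (Set.mem_Icc.mpr ⟨le_refl 0, hε2.le⟩) (Set.mem_Icc.mpr ⟨hε2.le, le_refl _⟩) hε2
  have h02 : g (ε/2) ≤ g 0 := (hεall (hmem _ (Or.inr rfl))).2.2
  linarith

lemma hess_quadform_nonpos {N : ℕ} {F : EuclideanSpace ℝ (Fin N) → ℝ}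
    {x₀ v : EuclideanSpace ℝ (Fin N)}
    (hx₀ : x₀ ≠ 0) (hF : ContDiffOn ℝ (⊤ : ℕ∞) F {x | x ≠ 0}) (hmax : IsLocalMax F x₀) :
    fderiv ℝ (fun y => fderiv ℝ F y v) x₀ v ≤ 0 := by
  have hopen : IsOpen {x : EuclideanSpace ℝ (Fin N) | x ≠ 0} := isOpen_ne
  have hFat : ∀ y : EuclideanSpace ℝ (Fin N), y ≠ 0 → ContDiffAt ℝ (⊤ : ℕ∞) F y := fun y hy =>
    hF.contDiffAt (hopen.mem_nhds hy)
  set L : ℝ → EuclideanSpace ℝ (Fin N) := fun s => x₀ + s • v with hLdef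
  have hL : ∀ s : ℝ, HasDerivAt L v s := by
    intro s
    rw [hLdef]
    simpa using ((hasDerivAt_id s).smul_const v).const_add x₀
  have hLc : ContinuousAt L 0 := (hL 0).continuousAt
  have hL0 : L 0 = x₀ := by simp [hLdef]
  have hne : ∀ᶠ s in nhds (0:ℝ), L s ≠ 0 := by
    have h1 : {x : EuclideanSpace ℝ (Fin N) | x ≠ 0} ∈ nhds (L 0) := by
      rw [hL0]; exact hopen.mem_nhds hx₀
    exact hLc h1
  set g : ℝ → ℝ := fun s => F (L s) with hgdef
  set G : ℝ → ℝ := fun s => fderiv ℝ F (L s) v with hGdef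
  have hGd : ∀ᶠ s in nhds (0:ℝ), HasDerivAt g (G s) s := by
    filter_upwards [hne] with s hs
    exact (((hFat _ hs).differentiableAt (by simp)).hasFDerivAt).comp_hasDerivAt s (hL s)
  have hφ : DifferentiableAt ℝ (fun y => fderiv ℝ F y v) x₀ := by
    have h1 : ContDiffAt ℝ 1 (fderiv ℝ F) x₀ := (hFat x₀ hx₀).fderiv_right (by norm_cast)
    exact ((h1.clm_apply contDiffAt_const).differentiableAt one_ne_zero)
  have hGq : HasDerivAt G (fderiv ℝ (fun y => fderiv ℝ F y v) x₀ v) 0 := by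
    have h2 : HasFDerivAt (fun y => fderiv ℝ F y v)
        (fderiv ℝ (fun y => fderiv ℝ F y v) x₀) (L 0) := by
      rw [hL0]; exact hφ.hasFDerivAt
    exact h2.comp_hasDerivAt 0 (hL 0)
  have hgmax : IsLocalMax g 0 := by
    have h1 : Filter.Tendsto L (nhds 0) (nhds x₀) := by
      have := hLc.tendsto; rwa [hL0] at this
    have h2 := h1.eventually hmax
    have hg0 : g 0 = F x₀ := by rw [hgdef]; simp [hL0]
    filter_upwards [h2] with s hs
    rw [hg0]; exact hs
  exact deriv2_nonpos_of_isLocalMax hgmax hGd hGq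

/-- The matrix of the ambient second derivative of `u` in the directions of the
orthonormal tangent frame `e` at `x`.  For the 1-homogeneous extension of a function
on the sphere this represents `D²u + u·I`. -/
noncomputable def hessMat {n : ℕ} (u : EuclideanSpace ℝ (Fin (n+1)) → ℝ)
    (x : EuclideanSpace ℝ (Fin (n+1))) (e : Fin n → EuclideanSpace ℝ (Fin (n+1))) :
    Matrix (Fin n) (Fin n) ℝ :=
  Matrix.of fun i j => fderiv ℝ (fun y => fderiv ℝ u y (e j)) x (e i)

/-- `u` (presented via its 1-homogeneous extension to `ℝ^{n+1}`) is a positive, smooth,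
uniformly convex solution of `ψ u^(α−1) ρ^δ σ_k^(β/k)(D²u + u·I) = c` on `Sⁿ`,
where `ρ = √(u² + |Du|²) = ‖∇u‖` for the homogeneous extension. -/
def IsSol (n k : ℕ) (α δ β c : ℝ) (ψ u : EuclideanSpace ℝ (Fin (n+1)) → ℝ) : Prop :=
  ContDiffOn ℝ (⊤ : ℕ∞) u {x | x ≠ 0} ∧
  (∀ r : ℝ, 0 < r → ∀ x, u (r • x) = r * u x) ∧
  (∀ x ∈ sphere (0 : EuclideanSpace ℝ (Fin (n+1))) 1, 0 < u x) ∧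
  (∀ x ∈ sphere (0 : EuclideanSpace ℝ (Fin (n+1))) 1,
    ∀ e : Fin n → EuclideanSpace ℝ (Fin (n+1)), Orthonormal ℝ e → (∀ i, ⟪e i, x⟫ = 0) →
      (hessMat u x e).PosDef ∧
      ψ x * u x ^ (α - 1) * ‖gradient u x‖ ^ δ *
        (sigmaK k (hessMat u x e)) ^ (β / (k:ℝ)) = c)


set_option maxHeartbeats 2000000 in
lemma key_le {n k : ℕ} (hn : 1 ≤ n) (hk1 : 1 ≤ k) (hkn : k ≤ n)
    {α δ β c : ℝ} (hβ : 0 < β) (hc : 0 < c) (hsum : α + δ + β < 1)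
    {ψ : EuclideanSpace ℝ (Fin (n+1)) → ℝ}
    (hψ : ∀ x ∈ sphere (0 : EuclideanSpace ℝ (Fin (n+1))) 1, 0 < ψ x)
    {u₁ u₂ : EuclideanSpace ℝ (Fin (n+1)) → ℝ}
    (h₁ : IsSol n k α δ β c ψ u₁) (h₂ : IsSol n k α δ β c ψ u₂) :
    ∀ x ∈ sphere (0 : EuclideanSpace ℝ (Fin (n+1))) 1, u₁ x ≤ u₂ x := by
  obtain ⟨hsm₁, hom₁, pos₁, heq₁⟩ := h₁
  obtain ⟨hsm₂, hom₂, pos₂, heq₂⟩ := h₂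
  have hsub : sphere (0 : EuclideanSpace ℝ (Fin (n+1))) 1 ⊆
      {x : EuclideanSpace ℝ (Fin (n+1)) | x ≠ 0} := by
    intro x hx
    rw [mem_sphere_zero_iff_norm] at hx
    intro h
    rw [h] at hx; simp at hx
  haveI : Nontrivial (EuclideanSpace ℝ (Fin (n+1))) := ⟨⟨EuclideanSpace.single 0 1, 0, by
    intro h
    have := congrArg (fun w => w 0) h
    simp [EuclideanSpace.single_apply] at this⟩⟩
  have hSne : (sphere (0 : EuclideanSpace ℝ (Fin (n+1))) 1).Nonempty :=
    NormedSpace.sphere_nonempty.mpr zero_le_one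
  have hcont : ContinuousOn (fun x => u₁ x / u₂ x)
      (sphere (0 : EuclideanSpace ℝ (Fin (n+1))) 1) :=
    (hsm₁.continuousOn.mono hsub).div (hsm₂.continuousOn.mono hsub)
      (fun x hx => (pos₂ x hx).ne')
  obtain ⟨x₀, hx₀S, hmaxOn⟩ :=
    (isCompact_sphere (0 : EuclideanSpace ℝ (Fin (n+1))) 1).exists_isMaxOn hSne hcont
  set t := u₁ x₀ / u₂ x₀ with htdef
  have hu₂x₀ : 0 < u₂ x₀ := pos₂ x₀ hx₀S
  have hu₁x₀ : 0 < u₁ x₀ := pos₁ x₀ hx₀S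
  have ht : 0 < t := div_pos hu₁x₀ hu₂x₀
  have hratio : ∀ x ∈ sphere (0 : EuclideanSpace ℝ (Fin (n+1))) 1, u₁ x ≤ t * u₂ x := by
    intro x hx
    have h1 := isMaxOn_iff.mp hmaxOn x hx
    exact (div_le_iff₀ (pos₂ x hx)).mp h1
  suffices hts : t ≤ 1 by
    intro x hx
    have := hratio x hx
    nlinarith [pos₂ x hx]
  -- F and its local max
  set F : EuclideanSpace ℝ (Fin (n+1)) → ℝ := fun y => u₁ y - t * u₂ y with hFdef
  have hFsm : ContDiffOn ℝ (⊤ : ℕ∞) F {x : EuclideanSpace ℝ (Fin (n+1)) | x ≠ 0} :=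
    hsm₁.sub (contDiffOn_const.mul hsm₂)
  have hx₀ne : x₀ ≠ 0 := hsub hx₀S
  have hopen : IsOpen {x : EuclideanSpace ℝ (Fin (n+1)) | x ≠ 0} := isOpen_ne
  have hF0 : F x₀ = 0 := by
    rw [hFdef]
    simp only [htdef]
    field_simp
    ring
  have hFmax : IsLocalMax F x₀ := by
    have hmem : {x : EuclideanSpace ℝ (Fin (n+1)) | x ≠ 0} ∈ nhds x₀ := hopen.mem_nhds hx₀ne
    have : ∀ᶠ y in nhds x₀, F y ≤ F x₀ := by
      filter_upwards [hmem] with y hy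
      rw [hF0]
      have hy' : y ≠ 0 := hy
      have hr : 0 < ‖y‖ := norm_pos_iff.mpr hy'
      have hz : (‖y‖⁻¹ • y) ∈ sphere (0 : EuclideanSpace ℝ (Fin (n+1))) 1 := by
        rw [mem_sphere_zero_iff_norm, norm_smul, norm_inv, norm_norm]
        field_simp
      have hy2 : y = ‖y‖ • (‖y‖⁻¹ • y) := by
        rw [smul_smul]
        rw [mul_inv_cancel₀ hr.ne', one_smul]
      have h1 : u₁ y = ‖y‖ * u₁ (‖y‖⁻¹ • y) := by
        conv_lhs => rw [hy2]
        rw [hom₁ ‖y‖ hr]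
      have h2 : u₂ y = ‖y‖ * u₂ (‖y‖⁻¹ • y) := by
        conv_lhs => rw [hy2]
        rw [hom₂ ‖y‖ hr]
      have h3 := hratio _ hz
      rw [hFdef]
      simp only
      rw [h1, h2]
      nlinarith
    exact this
  -- first derivative information
  have hcd₁ : ContDiffAt ℝ (⊤ : ℕ∞) u₁ x₀ := hsm₁.contDiffAt (hopen.mem_nhds hx₀ne)
  have hcd₂ : ContDiffAt ℝ (⊤ : ℕ∞) u₂ x₀ := hsm₂.contDiffAt (hopen.mem_nhds hx₀ne)
  have hd1 : DifferentiableAt ℝ u₁ x₀ := hcd₁.differentiableAt (by simp)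
  have hd2 : DifferentiableAt ℝ u₂ x₀ := hcd₂.differentiableAt (by simp)
  have hfd : fderiv ℝ F x₀ = 0 := hFmax.fderiv_eq_zero
  have hfd₁ : fderiv ℝ u₁ x₀ = t • fderiv ℝ u₂ x₀ := by
    have hsplit : fderiv ℝ F x₀ = fderiv ℝ u₁ x₀ - t • fderiv ℝ u₂ x₀ := by
      rw [hFdef]
      rw [fderiv_fun_sub hd1 (hd2.const_mul t), fderiv_const_mul hd2 t]
    rw [hsplit] at hfd
    exact sub_eq_zero.mp hfd
  have hgrad : gradient u₁ x₀ = t • gradient u₂ x₀ := by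
    rw [gradient, gradient, hfd₁, _root_.map_smul]
  have hnormg : ‖gradient u₁ x₀‖ = t * ‖gradient u₂ x₀‖ := by
    rw [hgrad, norm_smul, Real.norm_eq_abs, abs_of_pos ht]
  -- Euler relation for u₂ at x₀, to get nonvanishing gradient
  have heuler : (fderiv ℝ u₂ x₀) x₀ = u₂ x₀ := by
    have hL : HasDerivAt (fun r : ℝ => r • x₀) x₀ 1 := by
      simpa using (hasDerivAt_id (1:ℝ)).smul_const x₀
    have h4 : HasDerivAt (fun r : ℝ => u₂ (r • x₀)) ((fderiv ℝ u₂ x₀) x₀) 1 := by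
      have hf2 : HasFDerivAt u₂ (fderiv ℝ u₂ x₀) ((fun r : ℝ => r • x₀) 1) := by
        rw [show ((fun r : ℝ => r • x₀) 1) = x₀ by simp]
        exact hd2.hasFDerivAt
      exact hf2.comp_hasDerivAt 1 hL
    have hev : (fun r : ℝ => u₂ (r • x₀)) =ᶠ[nhds (1:ℝ)] (fun r => r * u₂ x₀) := by
      filter_upwards [Ioi_mem_nhds (show (0:ℝ) < 1 by norm_num)] with r hr
      exact hom₂ r hr x₀
    have h2 : HasDerivAt (fun r : ℝ => r * u₂ x₀) (u₂ x₀) 1 := by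
      simpa using (hasDerivAt_id (1:ℝ)).mul_const (u₂ x₀)
    have h3 : HasDerivAt (fun r : ℝ => u₂ (r • x₀)) (u₂ x₀) 1 :=
      h2.congr_of_eventuallyEq hev
    exact h4.unique h3
  have hgradx : ⟪gradient u₂ x₀, x₀⟫ = u₂ x₀ := by
    rw [gradient]
    rw [InnerProductSpace.toDual_symm_apply]
    exact heuler
  have hgradne : gradient u₂ x₀ ≠ 0 := by
    intro h
    rw [h, inner_zero_left] at hgradx
    linarith
  have hρ₂ : 0 < ‖gradient u₂ x₀‖ := norm_pos_iff.mpr hgradne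
  -- tangential orthonormal frame at x₀
  have hfinrank : Module.finrank ℝ
      ((ℝ ∙ x₀)ᗮ : Submodule ℝ (EuclideanSpace ℝ (Fin (n+1)))) = n := by
    have h1 := Submodule.finrank_add_finrank_orthogonal (K := (ℝ ∙ x₀ :
      Submodule ℝ (EuclideanSpace ℝ (Fin (n+1)))))
    rw [finrank_span_singleton hx₀ne] at h1
    have h2 : Module.finrank ℝ (EuclideanSpace ℝ (Fin (n+1))) = n + 1 := by
      simp [finrank_euclideanSpace]
    omega
  set b := (stdOrthonormalBasis ℝ
      ((ℝ ∙ x₀)ᗮ : Submodule ℝ (EuclideanSpace ℝ (Fin (n+1))))).reindex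
    (finCongr hfinrank) with hbdef
  set e : Fin n → EuclideanSpace ℝ (Fin (n+1)) :=
    fun i => (b i : EuclideanSpace ℝ (Fin (n+1))) with hedef
  have heo : Orthonormal ℝ e := by
    have hbo := b.orthonormal
    constructor
    · intro i
      rw [hedef]
      exact hbo.1 i
    · intro i j hij
      have h : (inner (𝕜 := ℝ) (b i) (b j) : ℝ) = 0 := hbo.2 hij
      rw [Submodule.coe_inner] at h
      rw [hedef]
      exact h
  have hperp : ∀ i, ⟪e i, x₀⟫ = 0 := by
    intro i
    have hmem := (b i).2
    rw [Submodule.mem_orthogonal] at hmem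
    have h := hmem x₀ (Submodule.mem_span_singleton_self x₀)
    rw [hedef, real_inner_comm]
    exact h
  obtain ⟨hpd₁, heqn₁⟩ := heq₁ x₀ hx₀S e heo hperp
  obtain ⟨hpd₂, heqn₂⟩ := heq₂ x₀ hx₀S e heo hperp
  -- second derivative comparison
  have hdiffat : ∀ y : EuclideanSpace ℝ (Fin (n+1)), y ≠ 0 →
      DifferentiableAt ℝ u₁ y ∧ DifferentiableAt ℝ u₂ y := by
    intro y hy
    exact ⟨(hsm₁.contDiffAt (hopen.mem_nhds hy)).differentiableAt (by simp),
      (hsm₂.contDiffAt (hopen.mem_nhds hy)).differentiableAt (by simp)⟩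
  have hev : ∀ w : EuclideanSpace ℝ (Fin (n+1)),
      (fun y => fderiv ℝ F y w) =ᶠ[nhds x₀]
        (fun y => fderiv ℝ u₁ y w - t * fderiv ℝ u₂ y w) := by
    intro w
    filter_upwards [hopen.mem_nhds hx₀ne] with y hy
    have hdy := hdiffat y hy
    rw [hFdef]
    rw [fderiv_fun_sub hdy.1 (hdy.2.const_mul t), fderiv_const_mul hdy.2 t]
    simp
  have hφd : ∀ w : EuclideanSpace ℝ (Fin (n+1)),
      DifferentiableAt ℝ (fun y => fderiv ℝ u₁ y w) x₀ ∧
      DifferentiableAt ℝ (fun y => fderiv ℝ u₂ y w) x₀ := by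
    intro w
    constructor
    · exact (((hcd₁.fderiv_right (m := 1) (by norm_cast)).clm_apply contDiffAt_const).differentiableAt one_ne_zero :
        DifferentiableAt ℝ (fun y => (fderiv ℝ u₁ y) w) x₀)
    · exact (((hcd₂.fderiv_right (m := 1) (by norm_cast)).clm_apply contDiffAt_const).differentiableAt one_ne_zero :
        DifferentiableAt ℝ (fun y => (fderiv ℝ u₂ y) w) x₀)
  have hentry : ∀ i j, fderiv ℝ (fun y => fderiv ℝ F y (e j)) x₀ (e i)
      = hessMat u₁ x₀ e i j - t * hessMat u₂ x₀ e i j := by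
    intro i j
    have h1 : fderiv ℝ (fun y => fderiv ℝ F y (e j)) x₀
        = fderiv ℝ (fun y => fderiv ℝ u₁ y (e j) - t * fderiv ℝ u₂ y (e j)) x₀ :=
      (hev (e j)).fderiv_eq
    rw [h1, fderiv_fun_sub (hφd (e j)).1 ((hφd (e j)).2.const_mul t),
      fderiv_const_mul (hφd (e j)).2 t]
    simp [hessMat]
  have hFcd : ContDiffAt ℝ (⊤ : ℕ∞) F x₀ := hFsm.contDiffAt (hopen.mem_nhds hx₀ne)
  have hdF' : DifferentiableAt ℝ (fderiv ℝ F) x₀ :=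
    (hFcd.fderiv_right (m := 1) (by norm_cast)).differentiableAt one_ne_zero
  have happ : ∀ w z : EuclideanSpace ℝ (Fin (n+1)),
      fderiv ℝ (fun y => fderiv ℝ F y w) x₀ z = (fderiv ℝ (fderiv ℝ F) x₀ z) w := by
    intro w z
    rw [fderiv_clm_apply hdF' (differentiableAt_const w)]
    simp
  have hPSD : ((t • hessMat u₂ x₀ e) - hessMat u₁ x₀ e).PosSemidef := by
    refine Matrix.PosSemidef.of_dotProduct_mulVec_nonneg ?_ fun ξ => ?_
    · show ((t • hessMat u₂ x₀ e) - hessMat u₁ x₀ e)ᴴ = _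
      rw [Matrix.conjTranspose_sub, Matrix.conjTranspose_smul, hpd₁.1.eq, hpd₂.1.eq,
        star_trivial]
    · 
      set v : EuclideanSpace ℝ (Fin (n+1)) := ∑ i, ξ i • e i with hv
      have hQ := hess_quadform_nonpos (v := v) hx₀ne hFsm hFmax
      have hQval : fderiv ℝ (fun y => fderiv ℝ F y v) x₀ v
          = ∑ i, ∑ j, ξ i * (ξ j *
              (hessMat u₁ x₀ e i j - t * hessMat u₂ x₀ e i j)) := by
        rw [happ v v]
        have h1 : fderiv ℝ (fderiv ℝ F) x₀ v = ∑ i, ξ i • fderiv ℝ (fderiv ℝ F) x₀ (e i) := by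
          rw [hv, map_sum]
          exact Finset.sum_congr rfl fun i _ => by rw [_root_.map_smul]
        rw [h1, ContinuousLinearMap.sum_apply]
        refine Finset.sum_congr rfl fun i _ => ?_
        have h2 : (fderiv ℝ (fderiv ℝ F) x₀ (e i)) v
            = ∑ j, ξ j * ((fderiv ℝ (fderiv ℝ F) x₀ (e i)) (e j)) := by
          rw [hv, map_sum]
          exact Finset.sum_congr rfl fun j _ => by rw [_root_.map_smul, smul_eq_mul]
        rw [ContinuousLinearMap.smul_apply, smul_eq_mul, h2, Finset.mul_sum]
        refine Finset.sum_congr rfl fun j _ => ?_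
        rw [← happ (e j) (e i), hentry i j]
      rw [hQval] at hQ
      have hform : dotProduct (star ξ)
          (((t • hessMat u₂ x₀ e) - hessMat u₁ x₀ e) *ᵥ ξ)
          = -(∑ i, ∑ j, ξ i * (ξ j *
              (hessMat u₁ x₀ e i j - t * hessMat u₂ x₀ e i j))) := by
        simp only [dotProduct, Matrix.mulVec, star_trivial, Matrix.sub_apply,
          Matrix.smul_apply, smul_eq_mul]
        rw [← Finset.sum_neg_distrib]
        refine Finset.sum_congr rfl fun i _ => ?_
        rw [← Finset.sum_neg_distrib, Finset.mul_sum]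
        refine Finset.sum_congr rfl fun j _ => ?_
        ring
      rw [hform]
      linarith
  -- final comparison chain
  have hu₁eq : u₁ x₀ = t * u₂ x₀ := by rw [htdef]; field_simp
  have hσmono : sigmaK k (hessMat u₁ x₀ e) ≤ t ^ k * sigmaK k (hessMat u₂ x₀ e) := by
    have h := sigmaK_mono hkn hpd₁ hPSD
    rwa [sigmaK_smul hkn] at h
  have hσ₁pos : 0 < sigmaK k (hessMat u₁ x₀ e) := sigmaK_pos hkn hpd₁
  have hσ₂pos : 0 < sigmaK k (hessMat u₂ x₀ e) := sigmaK_pos hkn hpd₂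
  have hψ₀ := hψ x₀ hx₀S
  have hkR : (0:ℝ) < (k:ℝ) := by exact_mod_cast hk1
  have hbk : 0 ≤ β / (k:ℝ) := le_of_lt (div_pos hβ hkR)
  have hrpow : (sigmaK k (hessMat u₁ x₀ e)) ^ (β / (k:ℝ))
      ≤ t ^ β * (sigmaK k (hessMat u₂ x₀ e)) ^ (β / (k:ℝ)) := by
    have h1 : (sigmaK k (hessMat u₁ x₀ e)) ^ (β / (k:ℝ))
        ≤ (t ^ k * sigmaK k (hessMat u₂ x₀ e)) ^ (β / (k:ℝ)) :=
      Real.rpow_le_rpow hσ₁pos.le hσmono hbk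
    have h2 : (t ^ k * sigmaK k (hessMat u₂ x₀ e)) ^ (β / (k:ℝ))
        = t ^ β * (sigmaK k (hessMat u₂ x₀ e)) ^ (β / (k:ℝ)) := by
      rw [Real.mul_rpow (by positivity) hσ₂pos.le]
      congr 1
      rw [← Real.rpow_natCast t k, ← Real.rpow_mul ht.le]
      congr 1
      field_simp
    rwa [h2] at h1
  have hPpos : 0 < ψ x₀ * (t * u₂ x₀) ^ (α - 1) * (t * ‖gradient u₂ x₀‖) ^ δ :=
    mul_pos (mul_pos hψ₀ (Real.rpow_pos_of_pos (mul_pos ht hu₂x₀) _))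
      (Real.rpow_pos_of_pos (mul_pos ht hρ₂) _)
  have hchain : c ≤ t ^ (α - 1 + δ + β) * c := by
    have e1 : c = ψ x₀ * (t * u₂ x₀) ^ (α - 1) * (t * ‖gradient u₂ x₀‖) ^ δ *
        (sigmaK k (hessMat u₁ x₀ e)) ^ (β / (k:ℝ)) := by
      rw [← heqn₁, hu₁eq, hnormg]
    have e2 : ψ x₀ * (t * u₂ x₀) ^ (α - 1) * (t * ‖gradient u₂ x₀‖) ^ δ *
          (sigmaK k (hessMat u₁ x₀ e)) ^ (β / (k:ℝ))
        ≤ ψ x₀ * (t * u₂ x₀) ^ (α - 1) * (t * ‖gradient u₂ x₀‖) ^ δ *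
          (t ^ β * (sigmaK k (hessMat u₂ x₀ e)) ^ (β / (k:ℝ))) :=
      mul_le_mul_of_nonneg_left hrpow hPpos.le
    have e3 : ψ x₀ * (t * u₂ x₀) ^ (α - 1) * (t * ‖gradient u₂ x₀‖) ^ δ *
          (t ^ β * (sigmaK k (hessMat u₂ x₀ e)) ^ (β / (k:ℝ)))
        = t ^ (α - 1 + δ + β) *
          (ψ x₀ * u₂ x₀ ^ (α - 1) * ‖gradient u₂ x₀‖ ^ δ *
            (sigmaK k (hessMat u₂ x₀ e)) ^ (β / (k:ℝ))) := by
      rw [Real.mul_rpow ht.le hu₂x₀.le, Real.mul_rpow ht.le (norm_nonneg _),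
        Real.rpow_add ht, Real.rpow_add ht]
      ring
    calc c = _ := e1
      _ ≤ _ := e2
      _ = _ := e3
      _ = t ^ (α - 1 + δ + β) * c := by rw [heqn₂]
  by_contra h1t
  push_neg at h1t
  have hlt : t ^ (α - 1 + δ + β) < 1 :=
    Real.rpow_lt_one_of_one_lt_of_neg h1t (by linarith)
  nlinarith

/-- uniqueness for `ψ u^(α−1) ρ^δ σ_k^(β/k)(D²u+uI) = c` when `α+δ+β < 1`. -/
theorem stmt_4 (n k : ℕ) (hn : 1 ≤ n) (hk1 : 1 ≤ k) (hkn : k ≤ n)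
    (α δ β c : ℝ) (hβ : 0 < β) (hc : 0 < c) (hsum : α + δ + β < 1)
    (ψ : EuclideanSpace ℝ (Fin (n+1)) → ℝ)
    (hψ : ∀ x ∈ sphere (0 : EuclideanSpace ℝ (Fin (n+1))) 1, 0 < ψ x)
    (u₁ u₂ : EuclideanSpace ℝ (Fin (n+1)) → ℝ)
    (h₁ : IsSol n k α δ β c ψ u₁) (h₂ : IsSol n k α δ β c ψ u₂) :
    ∀ x ∈ sphere (0 : EuclideanSpace ℝ (Fin (n+1))) 1, u₁ x = u₂ x := by
  intro x hx
  have h12 := key_le hn hk1 hkn hβ hc hsum hψ h₁ h₂ x hx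
  have h21 := key_le hn hk1 hkn hβ hc hsum hψ h₂ h₁ x hx
  linarith
end

section
/- Let u : Sⁿ × [0,T) → ℝ be smooth positive and suppose Q := ψ u^{α−1} ρ^δ σ_k^{β/k}(D²u + u I) satisfies the evolution identity ∂_t Q = (α+δ+β−1)(Q−η)Q + (βuQ/(kσ_k)) σ_k^{ij} D_iD_jQ + lower-order gradient terms in Q, where η > 0 and α+δ+β−1 ≤ 0 and [σ_k^{ij}] is positive definite. Then Q is bounded above and below for all t ∈ [0,T) by constants depending only on max_{Sⁿ} Q(·,0), min_{Sⁿ} Q(·,0), η and α+δ+β: precisely, if α+δ+β = 1 then min Q(·,0) ≤ Q ≤ max Q(·,0); if α+δ+β < 1 then min{min Q(·,0), η} ≤ Q ≤ max{max Q(·,0), η}. -/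
open Filter Topology

lemma aux_mp {X : Type*} [TopologicalSpace X] [CompactSpace X] [Nonempty X]
    (T K : ℝ) (Q Q' : ℝ → X → ℝ)
    (hcont : Continuous fun p : ℝ × X => Q p.1 p.2)
    (hderiv : ∀ x : X, ∀ t ∈ Set.Ico (0:ℝ) T, HasDerivAt (fun s => Q s x) (Q' t x) t)
    (h0 : ∀ x, Q 0 x ≤ K)
    (hdec : ∀ t ∈ Set.Ico (0:ℝ) T, ∀ x : X, (∀ y, Q t y ≤ Q t x) → K < Q t x → Q' t x ≤ 0) :
    ∀ t ∈ Set.Ico (0:ℝ) T, ∀ x : X, Q t x ≤ K := by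
  intro t1 ht1 x
  refine le_of_forall_pos_le_add fun ε hε => ?_
  by_contra hcon
  push_neg at hcon
  set ε0 := ε / Real.exp t1 with hε0def
  have hε0 : 0 < ε0 := div_pos hε (Real.exp_pos _)
  have ht10 : 0 ≤ t1 := ht1.1
  have hεeq : ε0 * Real.exp t1 = ε := div_mul_cancel₀ _ (Real.exp_pos t1).ne'
  set C : Set (ℝ × X) := (Set.Icc 0 t1 ×ˢ Set.univ) ∩
    {p : ℝ × X | K + ε0 * Real.exp p.1 ≤ Q p.1 p.2} with hC
  have hCc : IsCompact C := by
    apply (isCompact_Icc.prod isCompact_univ).inter_right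
    exact isClosed_le (by fun_prop) hcont
  set B : Set ℝ := Prod.fst '' C with hBdef
  have hBc : IsCompact B := hCc.image continuous_fst
  have hBne : B.Nonempty := by
    refine ⟨t1, ⟨(t1, x), ⟨⟨⟨ht10, le_rfl⟩, trivial⟩, ?_⟩, rfl⟩⟩
    simp only [Set.mem_setOf_eq]
    rw [hεeq]
    linarith
  set t' := sInf B with ht'def
  have ht'B : t' ∈ B := hBc.sInf_mem hBne
  obtain ⟨⟨t'', x0⟩, hmem, ht''⟩ := ht'B
  have heq : t'' = t' := ht''
  subst heq
  obtain ⟨⟨ht''I, -⟩, hx0⟩ := hmem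
  simp only [Set.mem_setOf_eq] at hx0
  simp only [Set.mem_Icc] at ht''I
  have hBdd : BddBelow B := hBc.bddBelow
  have ht'pos : 0 < t' := by
    rcases lt_or_eq_of_le ht''I.1 with h | h
    · exact h
    · exfalso
      have := h0 x0
      rw [← h] at hx0
      simp only [Set.mem_setOf_eq, Real.exp_zero, mul_one] at hx0
      linarith
  have ht'Ico : t' ∈ Set.Ico (0:ℝ) T := ⟨ht''I.1, lt_of_le_of_lt ht''I.2 ht1.2⟩
  -- max point at time t'
  have hcontt' : Continuous fun y : X => Q t' y :=
    hcont.comp (continuous_const.prodMk continuous_id)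
  obtain ⟨xm, -, hxm⟩ := isCompact_univ.exists_isMaxOn Set.univ_nonempty
    hcontt'.continuousOn
  have hxm' : ∀ y, Q t' y ≤ Q t' xm := fun y => hxm (Set.mem_univ y)
  have hQbig : K + ε0 * Real.exp t' ≤ Q t' xm := le_trans hx0 (hxm' x0)
  have hKlt : K < Q t' xm := by
    have := mul_pos hε0 (Real.exp_pos t')
    linarith
  have hQ'le : Q' t' xm ≤ 0 := hdec t' ht'Ico xm hxm' hKlt
  -- derivative of g at t'
  have hg : HasDerivAt (fun s => Q s xm - (K + ε0 * Real.exp s))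
      (Q' t' xm - ε0 * Real.exp t') t' :=
    (hderiv xm t' ht'Ico).sub (((Real.hasDerivAt_exp t').const_mul ε0).const_add K)
  have hslope : Tendsto (slope (fun s => Q s xm - (K + ε0 * Real.exp s)) t')
      (𝓝[<] t') (𝓝 (Q' t' xm - ε0 * Real.exp t')) := by
    have := hasDerivAt_iff_tendsto_slope.mp hg
    exact this.mono_left (nhdsWithin_mono _ fun y hy => ne_of_lt hy)
  have hnonneg : 0 ≤ Q' t' xm - ε0 * Real.exp t' := by
    refine ge_of_tendsto hslope ?_
    filter_upwards [Ioo_mem_nhdsLT ht'pos] with s hs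
    have hsnotB : s ∉ B := notMem_of_lt_csInf hs.2 hBdd
    have hQs : Q s xm < K + ε0 * Real.exp s := by
      by_contra hq
      push_neg at hq
      exact hsnotB ⟨(s, xm), ⟨⟨⟨hs.1.le, hs.2.le.trans ht''I.2⟩, trivial⟩, hq⟩, rfl⟩
    have hgt' : 0 ≤ Q t' xm - (K + ε0 * Real.exp t') := by linarith
    have hgs : Q s xm - (K + ε0 * Real.exp s) < 0 := by linarith
    rw [slope_def_field]
    exact div_nonneg_of_nonpos (by linarith) (by linarith [hs.2])
  have := mul_pos hε0 (Real.exp_pos t')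
  linarith
/-- abstract parabolic maximum-principle bound for
`Q = ψ u^{α−1} ρ^δ σ_k^{β/k}` along the normalized flow: if at spatial maxima
`∂_t Q ≤ (α+δ+β−1)(Q−η)Q` and at spatial minima `∂_t Q ≥ (α+δ+β−1)(Q−η)Q`,
with `α+δ+β−1 ≤ 0` and `Q > 0`, then `Q` stays between the stated bounds. -/
theorem stmt_18 {X : Type*} [TopologicalSpace X] [CompactSpace X] [Nonempty X]
    (T α δ β η : ℝ) (hT : 0 < T) (hη : 0 < η) (hsum : α + δ + β - 1 ≤ 0)
    (Q Q' : ℝ → X → ℝ)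
    (hcont : Continuous fun p : ℝ × X => Q p.1 p.2)
    (hQpos : ∀ t ∈ Set.Ico (0:ℝ) T, ∀ x : X, 0 < Q t x)
    (hderiv : ∀ x : X, ∀ t ∈ Set.Ico (0:ℝ) T, HasDerivAt (fun s => Q s x) (Q' t x) t)
    (hmax : ∀ t ∈ Set.Ico (0:ℝ) T, ∀ x : X, (∀ y, Q t y ≤ Q t x) →
      Q' t x ≤ (α + δ + β - 1) * (Q t x - η) * Q t x)
    (hmin : ∀ t ∈ Set.Ico (0:ℝ) T, ∀ x : X, (∀ y, Q t x ≤ Q t y) →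
      (α + δ + β - 1) * (Q t x - η) * Q t x ≤ Q' t x) :
    (α + δ + β = 1 → ∀ t ∈ Set.Ico (0:ℝ) T, ∀ x : X,
      (⨅ y, Q 0 y) ≤ Q t x ∧ Q t x ≤ ⨆ y, Q 0 y) ∧
    (α + δ + β < 1 → ∀ t ∈ Set.Ico (0:ℝ) T, ∀ x : X,
      min (⨅ y, Q 0 y) η ≤ Q t x ∧ Q t x ≤ max (⨆ y, Q 0 y) η) := by
  have contQ0 : Continuous (Q 0) :=
    hcont.comp (continuous_const.prodMk continuous_id)
  have bddA : BddAbove (Set.range (Q 0)) := (isCompact_range contQ0).bddAbove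
  have bddB : BddBelow (Set.range (Q 0)) := (isCompact_range contQ0).bddBelow
  have hle_sup : ∀ x, Q 0 x ≤ ⨆ y, Q 0 y := fun x => le_ciSup bddA x
  have hinf_le : ∀ x, (⨅ y, Q 0 y) ≤ Q 0 x := fun x => ciInf_le bddB x
  have hcontneg : Continuous fun p : ℝ × X => -Q p.1 p.2 := hcont.neg
  have hderivneg : ∀ x : X, ∀ t ∈ Set.Ico (0:ℝ) T,
      HasDerivAt (fun s => -Q s x) (-Q' t x) t := fun x t ht => (hderiv x t ht).neg
  constructor
  · intro h1 t ht x
    have hc0 : α + δ + β - 1 = 0 := by linarith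
    constructor
    · have := aux_mp T (-(⨅ y, Q 0 y)) (fun t x => -Q t x) (fun t x => -Q' t x)
        hcontneg hderivneg (fun x => neg_le_neg (hinf_le x)) ?_ t ht x
      · linarith
      · intro t ht x hm _
        have hmono : ∀ y, Q t x ≤ Q t y := fun y => by
          have := hm y; simpa using neg_le_neg this |>.trans_eq (neg_neg _) |>.trans_eq' (neg_neg _).symm
        have := hmin t ht x hmono
        rw [hc0, zero_mul, zero_mul] at this
        simpa using this
    · have := aux_mp T (⨆ y, Q 0 y) Q Q' hcont hderiv hle_sup ?_ t ht x
      · exact this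
      · intro t ht x hm _
        have := hmax t ht x hm
        rw [hc0, zero_mul, zero_mul] at this
        exact this
  · intro h1 t ht x
    constructor
    · have := aux_mp T (-min (⨅ y, Q 0 y) η) (fun t x => -Q t x) (fun t x => -Q' t x)
        hcontneg hderivneg
        (fun x => neg_le_neg ((min_le_left _ _).trans (hinf_le x))) ?_ t ht x
      · linarith
      · intro t ht x hm hK
        have hmono : ∀ y, Q t x ≤ Q t y := fun y => by
          have := hm y; simp only [neg_le_neg_iff] at this; exact this
        have hlt : Q t x < η := by
          have h3 : Q t x < min (⨅ y, Q 0 y) η := by simpa using hK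
          exact h3.trans_le (min_le_right _ _)
        have h2 := hmin t ht x hmono
        have hq := hQpos t ht x
        have hp : 0 ≤ (α + δ + β - 1) * (Q t x - η) := by nlinarith
        have : 0 ≤ (α + δ + β - 1) * (Q t x - η) * Q t x := mul_nonneg hp hq.le
        simp only [neg_nonpos]
        linarith
    · have := aux_mp T (max (⨆ y, Q 0 y) η) Q Q' hcont hderiv
        (fun x => (hle_sup x).trans (le_max_left _ _)) ?_ t ht x
      · exact this
      · intro t ht x hm hK
        have hgt : η < Q t x := lt_of_le_of_lt (le_max_right _ _) hK
        have h2 := hmax t ht x hm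
        have hq := hQpos t ht x
        have hp : (α + δ + β - 1) * (Q t x - η) ≤ 0 :=
          mul_nonpos_of_nonpos_of_nonneg hsum (by linarith)
        have : (α + δ + β - 1) * (Q t x - η) * Q t x ≤ 0 :=
          mul_nonpos_of_nonpos_of_nonneg hp hq.le
        linarith
end
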